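/- For a,b,α,β ∈ ℂ and c,γ ∈ ℂ*, the 𝔠𝔩𝔰-modules M_{a,b,c} and M_{α,β,γ} are isomorphic if and only if (a,b,c) = (α,β,γ); similarly for M'. Moreover M_{a,b,c} is never isomorphic to M'_{α,β,γ}. -/

import Mathlib

/-!
An even `ℂ[∂]`-module automorphism of `ℂ[∂]x ⊕ ℂ[∂]y` sends `x ↦ p x`, `y ↦ q y` with
`p, q ∈ ℂˣ`, since it commutes with `∂` and the only units of `ℂ[∂]` are constants.
Comparing `L₀ ₗ x` then recovers `aλ + b` for every `λ`, and comparing `G_i ₗ x`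
(resp. `G_i ₗ y` for `M'`) at `λ = 0` gives `cⁱ q = γⁱ p` for all `i`, hence `q = p` and `c = γ`.
-/

open Polynomial

/-- `ℂ[∂]`. -/
abbrev P := Polynomial ℂ
/-- The free `ℂ[∂]`-module `V = ℂ[∂]x ⊕ ℂ[∂]y`: the first component is the coefficient of
the even generator `x`, the second that of the odd generator `y`. -/
abbrev V := P × P

/-- Substitution `∂ ↦ ∂ + λ`. -/
noncomputable def sh (l : ℂ) (f : P) : P := f.comp (Polynomial.X + Polynomial.C l)

/-- The action of `∂` on `V`. -/
noncomputable def dV (v : V) : V := (Polynomial.X * v.1, Polynomial.X * v.2)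

/-- The `λ`-action of `L_i` on `M_{a,b,c}`:
`L_i ₗ x = cⁱ(∂+aλ+b)x`, `L_i ₗ y = cⁱ(∂+(a+1/2)λ+b)y`, extended by
`L_i ₗ (f(∂)v) = f(∂+λ) L_i ₗ v`. -/
noncomputable def LM (a b c : ℂ) (i : ℤ) (l : ℂ) (v : V) : V :=
  (Polynomial.C (c ^ i) * sh l v.1 * (Polynomial.X + Polynomial.C (a*l + b)),
   Polynomial.C (c ^ i) * sh l v.2 * (Polynomial.X + Polynomial.C ((a + 1/2)*l + b)))

/-- The `λ`-action of `G_i` on `M_{a,b,c}`: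
`G_i ₗ x = cⁱ y`, `G_i ₗ y = cⁱ(∂+2aλ+b)x`. -/
noncomputable def GM (a b c : ℂ) (i : ℤ) (l : ℂ) (v : V) : V :=
  (Polynomial.C (c ^ i) * sh l v.2 * (Polynomial.X + Polynomial.C (2*a*l + b)),
   Polynomial.C (c ^ i) * sh l v.1)

/-- The `λ`-action of `L_i` on `M'_{a,b,c}`:
`L_i ₗ x = cⁱ(∂+aλ+b)x`, `L_i ₗ y = cⁱ(∂+(a−1/2)λ+b)y`. -/
noncomputable def LM' (a b c : ℂ) (i : ℤ) (l : ℂ) (v : V) : V :=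
  (Polynomial.C (c ^ i) * sh l v.1 * (Polynomial.X + Polynomial.C (a*l + b)),
   Polynomial.C (c ^ i) * sh l v.2 * (Polynomial.X + Polynomial.C ((a - 1/2)*l + b)))

/-- The `λ`-action of `G_i` on `M'_{a,b,c}`:
`G_i ₗ x = cⁱ(∂+(2a−1)λ+b)y`, `G_i ₗ y = cⁱ x`. -/
noncomputable def GM' (a b c : ℂ) (i : ℤ) (l : ℂ) (v : V) : V :=
  (Polynomial.C (c ^ i) * sh l v.2,
   Polynomial.C (c ^ i) * sh l v.1 * (Polynomial.X + Polynomial.C ((2*a - 1)*l + b)))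

/-- An isomorphism of conformal `𝔠𝔩𝔰`-modules between the module `V` with actions
`(L₁, G₁)` and the module `V` with actions `(L₂, G₂)`: an even `ℂ[∂]`-module isomorphism
(i.e. a `ℂ`-linear equivalence commuting with `∂` and preserving the parity
decomposition `V = ℂ[∂]x ⊕ ℂ[∂]y`) commuting with all `λ`-actions. -/
def ClsIso (L₁ G₁ L₂ G₂ : ℤ → ℂ → V → V) : Prop :=
  ∃ φ : V ≃ₗ[ℂ] V,
    (∀ v : V, φ (dV v) = dV (φ v)) ∧
    (∀ v : V, v.2 = 0 → (φ v).2 = 0) ∧ (∀ v : V, v.1 = 0 → (φ v).1 = 0) ∧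
    (∀ (i : ℤ) (l : ℂ) (v : V),
      φ (L₁ i l v) = L₂ i l (φ v) ∧ φ (G₁ i l v) = G₂ i l (φ v))

lemma dV_eq_X_smul (v : V) : dV v = (X : P) • v := rfl

lemma map_polynomial_smul {φ : V →ₗ[ℂ] V} (hd : ∀ v, φ (dV v) = dV (φ v)) (f : P) (v : V) :
    φ (f • v) = f • φ v := by
  induction f using Polynomial.induction_on with
  | C k => rw [← algebraMap_eq, algebraMap_smul, map_smul, algebraMap_smul]
  | add f g hf hg => rw [add_smul, map_add, hf, hg, add_smul]
  | monomial n k ih =>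
    rw [show C k * X ^ (n + 1) = X * (C k * X ^ n) by ring, mul_smul, ← dV_eq_X_smul, hd, ih,
      dV_eq_X_smul, ← mul_smul]

noncomputable def diagV (p q : ℂ) (v : V) : V := (C p * v.1, C q * v.2)

lemma exists_C_eq_of_mul_eq_one {K : Type*} [Field K] {p w : K[X]} (h : w * p = 1) :
    ∃ r : K, r ≠ 0 ∧ p = C r := by
  obtain ⟨r, hr, hrp⟩ := Polynomial.isUnit_iff.mp (IsUnit.of_mul_eq_one_right _ h)
  exact ⟨r, hr.ne_zero, hrp.symm⟩

lemma exists_eq_diagV {φ : V ≃ₗ[ℂ] V} (hd : ∀ v, φ (dV v) = dV (φ v))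
    (hx : ∀ v : V, v.2 = 0 → (φ v).2 = 0) (hy : ∀ v : V, v.1 = 0 → (φ v).1 = 0) :
    ∃ p q : ℂ, p ≠ 0 ∧ q ≠ 0 ∧ ⇑φ = diagV p q := by
  obtain ⟨p', h10⟩ : ∃ p' : P, φ (1, 0) = (p', 0) := ⟨_, Prod.ext rfl (hx _ rfl)⟩
  obtain ⟨q', h01⟩ : ∃ q' : P, φ (0, 1) = (0, q') := ⟨_, Prod.ext (hy _ rfl) rfl⟩
  have hlin (f : P) (v : V) : φ (f • v) = f • φ v :=
    map_polynomial_smul (φ := φ.toLinearMap) hd f v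
  have hφ (v : V) : φ v = (v.1 * p', v.2 * q') := by
    have hv : v = v.1 • ((1, 0) : V) + v.2 • ((0, 1) : V) := by ext <;> simp
    conv_lhs => rw [hv, map_add, hlin, hlin, h10, h01]
    ext <;> simp
  obtain ⟨p, hp, rfl⟩ : ∃ p : ℂ, p ≠ 0 ∧ p' = C p := by
    obtain ⟨w, hw⟩ := φ.surjective (1, 0)
    exact exists_C_eq_of_mul_eq_one (w := w.1) (by simpa [hφ] using congrArg Prod.fst hw)
  obtain ⟨q, hq, rfl⟩ : ∃ q : ℂ, q ≠ 0 ∧ q' = C q := by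
    obtain ⟨w, hw⟩ := φ.surjective (0, 1)
    exact exists_C_eq_of_mul_eq_one (w := w.2) (by simpa [hφ] using congrArg Prod.snd hw)
  exact ⟨p, q, hp, hq, funext fun v => by rw [hφ, diagV, mul_comm, mul_comm v.2]⟩

lemma ClsIso.exists_diagV {L₁ G₁ L₂ G₂ : ℤ → ℂ → V → V} (h : ClsIso L₁ G₁ L₂ G₂) :
    ∃ p q : ℂ, p ≠ 0 ∧ q ≠ 0 ∧ ∀ i l v, diagV p q (L₁ i l v) = L₂ i l (diagV p q v) ∧
      diagV p q (G₁ i l v) = G₂ i l (diagV p q v) := by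
  obtain ⟨φ, hd, hx, hy, hcomm⟩ := h
  obtain ⟨p, q, hp, hq, hφ⟩ := exists_eq_diagV hd hx hy
  exact ⟨p, q, hp, hq, hφ ▸ hcomm⟩

lemma ClsIso.refl (L G : ℤ → ℂ → V → V) : ClsIso L G L G :=
  ⟨LinearEquiv.refl ℂ V, fun _ => rfl, fun _ => id, fun _ => id, fun _ _ _ => ⟨rfl, rfl⟩⟩

lemma eq_of_forall_mul_add_eq {R : Type*} [Ring R] {a b α β : R}
    (h : ∀ l, a * l + b = α * l + β) : a = α ∧ b = β := by
  have hb : b = β := by simpa using h 0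
  exact ⟨by simpa [hb] using h 1, hb⟩

lemma eq_of_forall_zpow_mul_eq {K : Type*} [Field K] {c γ u v : K} (hu : u ≠ 0)
    (h : ∀ i : ℤ, c ^ i * v = γ ^ i * u) : c = γ := by
  have hvu : v = u := by simpa using h 0
  simpa [hvu, hu] using h 1

lemma clsIso_LM_GM_iff {a b c α β γ : ℂ} :
    ClsIso (LM a b c) (GM a b c) (LM α β γ) (GM α β γ) ↔ (a, b, c) = (α, β, γ) := by
  refine ⟨fun h => ?_, fun h => by cases h; exact ClsIso.refl _ _⟩
  obtain ⟨p, q, hp, -, h⟩ := h.exists_diagV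
  have hL (l : ℂ) : a * l + b = α * l + β := by
    simpa [diagV, LM, sh, hp] using congrArg (fun v : V => v.1.coeff 0) (h 0 l (1, 0)).1
  have hG (i : ℤ) : c ^ i * q = γ ^ i * p := by
    simpa [diagV, GM, sh, hp, mul_comm] using congrArg (fun v : V => v.2.coeff 0) (h i 0 (1, 0)).2
  obtain ⟨rfl, rfl⟩ := eq_of_forall_mul_add_eq hL
  rw [eq_of_forall_zpow_mul_eq hp hG]

lemma clsIso_LM'_GM'_iff {a b c α β γ : ℂ} :
    ClsIso (LM' a b c) (GM' a b c) (LM' α β γ) (GM' α β γ) ↔ (a, b, c) = (α, β, γ) := by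
  refine ⟨fun h => ?_, fun h => by cases h; exact ClsIso.refl _ _⟩
  obtain ⟨p, q, hp, hq, h⟩ := h.exists_diagV
  have hL (l : ℂ) : a * l + b = α * l + β := by
    simpa [diagV, LM', sh, hp] using congrArg (fun v : V => v.1.coeff 0) (h 0 l (1, 0)).1
  have hG (i : ℤ) : c ^ i * p = γ ^ i * q := by
    simpa [diagV, GM', sh, mul_comm] using congrArg (fun v : V => v.1.coeff 0) (h i 0 (0, 1)).2
  obtain ⟨rfl, rfl⟩ := eq_of_forall_mul_add_eq hL
  rw [eq_of_forall_zpow_mul_eq hq hG]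

/-- `G₀ ₗ x` has degree `0` in `M` but degree `1` in `M'`. -/
lemma not_clsIso_LM_GM_LM'_GM' {a b c α β γ : ℂ} :
    ¬ ClsIso (LM a b c) (GM a b c) (LM' α β γ) (GM' α β γ) := by
  intro h
  obtain ⟨p, _, hp, -, h⟩ := h.exists_diagV
  have hcoeff : (0 : ℂ) = p := by
    simpa [diagV, GM, GM', sh] using congrArg (fun v : V => v.2.coeff 1) (h 0 0 (1, 0)).2
  exact hp hcoeff.symm

theorem stmt12_general (a b α β : ℂ) (c γ : ℂ) :
    (ClsIso (LM a b c) (GM a b c) (LM α β γ) (GM α β γ) ↔ (a, b, c) = (α, β, γ))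
    ∧ (ClsIso (LM' a b c) (GM' a b c) (LM' α β γ) (GM' α β γ) ↔ (a, b, c) = (α, β, γ))
    ∧ ¬ ClsIso (LM a b c) (GM a b c) (LM' α β γ) (GM' α β γ) :=
  ⟨clsIso_LM_GM_iff, clsIso_LM'_GM'_iff, not_clsIso_LM_GM_LM'_GM'⟩

/-- `M_{a,b,c} ≅ M_{α,β,γ}` iff `(a,b,c) = (α,β,γ)`, similarly for `M'`,
and `M_{a,b,c}` is never isomorphic to `M'_{α,β,γ}`. -/
theorem stmt12 (a b α β : ℂ) (c γ : ℂ) (hc : c ≠ 0) (hγ : γ ≠ 0) :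
    (ClsIso (LM a b c) (GM a b c) (LM α β γ) (GM α β γ) ↔ (a, b, c) = (α, β, γ))
    ∧ (ClsIso (LM' a b c) (GM' a b c) (LM' α β γ) (GM' α β γ) ↔ (a, b, c) = (α, β, γ))
    ∧ ¬ ClsIso (LM a b c) (GM a b c) (LM' α β γ) (GM' α β γ) :=
  stmt12_general a b α β c γ
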